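/- arXiv:2504.11385 — 4 statements merged into one kernel-verified Lean document; each statement's English description precedes it below -/
import Mathlib

section
/- Let Φ : X → ℝ ∪ {+∞} be proper and bounded below, let m ∈ ℕ, a > 0, and let {x^k} be a sequence in X satisfying Φ(x^{k+1}) + a‖x^{k+1} - x^k‖² ≤ Φ(x^{ℓ(k)}) for all k, where ℓ(k) is the largest index in argmax{Φ(x^j) : j = max(k-m,0), …, k}. Then the sequence {Φ(x^{ℓ(k)})}_{k∈ℕ} is nonincreasing and convergent. -/
open Filter Topology

/-- Lemma 2.2(i): under the GLL nonmonotone descent condition H1, the sequence of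
partial maximum objective values `Φ(x^{ℓ(k)})` is nonincreasing and convergent. -/
theorem stmt_1 {X : Type*} [NormedAddCommGroup X] [InnerProductSpace ℝ X]
    [FiniteDimensional ℝ X]
    (Φ : X → ℝ) (hbdd : BddBelow (Set.range Φ)) (m : ℕ) (a : ℝ) (ha : 0 < a)
    (x : ℕ → X) (ℓ : ℕ → ℕ)
    (hℓmem : ∀ k, ℓ k ∈ Finset.Icc (k - m) k)
    (hℓmax : ∀ k, ∀ j ∈ Finset.Icc (k - m) k, Φ (x j) ≤ Φ (x (ℓ k)))
    (hℓlargest : ∀ k, ∀ j ∈ Finset.Icc (k - m) k, Φ (x j) = Φ (x (ℓ k)) → j ≤ ℓ k)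
    (hH1 : ∀ k, Φ (x (k + 1)) + a * ‖x (k + 1) - x k‖ ^ 2 ≤ Φ (x (ℓ k))) :
    Antitone (fun k => Φ (x (ℓ k))) ∧
      ∃ L : ℝ, Tendsto (fun k => Φ (x (ℓ k))) atTop (𝓝 L) := by
  have hStep : ∀ k, Φ (x (ℓ (k + 1))) ≤ Φ (x (ℓ k)) := by
    intro k
    have hmem := hℓmem (k + 1)
    simp only [Finset.mem_Icc] at hmem
    rcases eq_or_lt_of_le hmem.2 with heq | hlt
    · rw [heq]
      have := hH1 k
      nlinarith [sq_nonneg ‖x (k + 1) - x k‖]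
    · apply hℓmax k
      simp only [Finset.mem_Icc]
      exact ⟨le_trans (by omega) hmem.1, by omega⟩
  have hanti : Antitone (fun k => Φ (x (ℓ k))) :=
    antitone_nat_of_succ_le hStep
  refine ⟨hanti, ?_⟩
  obtain ⟨b, hb⟩ := hbdd
  have hbdd' : BddBelow (Set.range fun k => Φ (x (ℓ k))) :=
    ⟨b, by rintro _ ⟨k, rfl⟩; exact hb (Set.mem_range_self _)⟩
  exact ⟨_, tendsto_atTop_ciInf hanti hbdd'⟩
end

section
/- Let Φ : X → ℝ ∪ {+∞} be proper and bounded below, let m ∈ ℕ, a > 0, and let {x^k} satisfy Φ(x^{k+1}) + a‖x^{k+1} - x^k‖² ≤ Φ(x^{ℓ(k)}) for all k, where ℓ(k) is the largest index in argmax{Φ(x^j) : j = max(k-m,0), …, k}. Then lim_{k→∞} ‖x^{ℓ(k)} - x^{ℓ(k)-1}‖ = 0. -/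
open Filter Topology

/-- Lemma 2.2(ii): under the GLL nonmonotone descent condition H1, the step lengths
at the partial-maximum indices tend to zero. -/
theorem stmt_2 {X : Type*} [NormedAddCommGroup X] [InnerProductSpace ℝ X]
    [FiniteDimensional ℝ X]
    (Φ : X → ℝ) (hbdd : BddBelow (Set.range Φ)) (m : ℕ) (a : ℝ) (ha : 0 < a)
    (x : ℕ → X) (ℓ : ℕ → ℕ)
    (hℓmem : ∀ k, ℓ k ∈ Finset.Icc (k - m) k)
    (hℓmax : ∀ k, ∀ j ∈ Finset.Icc (k - m) k, Φ (x j) ≤ Φ (x (ℓ k)))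
    (hℓlargest : ∀ k, ∀ j ∈ Finset.Icc (k - m) k, Φ (x j) = Φ (x (ℓ k)) → j ≤ ℓ k)
    (hH1 : ∀ k, Φ (x (k + 1)) + a * ‖x (k + 1) - x k‖ ^ 2 ≤ Φ (x (ℓ k))) :
    Tendsto (fun k => ‖x (ℓ k) - x (ℓ k - 1)‖) atTop (𝓝 0) := by
  set f : ℕ → ℝ := fun k => Φ (x (ℓ k)) with hf
  have hmem : ∀ k, k - m ≤ ℓ k ∧ ℓ k ≤ k := fun k => Finset.mem_Icc.mp (hℓmem k)
  -- f is antitone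
  have hanti : Antitone f := by
    apply antitone_nat_of_succ_le
    intro k
    rcases eq_or_lt_of_le (hmem (k+1)).2 with h | h
    · have := hH1 k
      have hnn : 0 ≤ a * ‖x (k + 1) - x k‖ ^ 2 :=
        mul_nonneg ha.le (sq_nonneg _)
      simp only [hf, h]
      linarith
    · have hle : ℓ (k+1) ∈ Finset.Icc (k - m) k := by
        have h1 := (hmem (k+1)).1
        exact Finset.mem_Icc.mpr ⟨by omega, by omega⟩
      exact hℓmax k _ hle
  -- f is bounded below
  have hbddf : BddBelow (Set.range f) := by
    obtain ⟨B, hB⟩ := hbdd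
    refine ⟨B, ?_⟩
    rintro y ⟨k, rfl⟩
    exact hB ⟨x (ℓ k), rfl⟩
  have hL : Tendsto f atTop (𝓝 (⨅ k, f k)) := tendsto_atTop_ciInf hanti hbddf
  set L := ⨅ k, f k
  -- ℓ k - 1 → ∞
  have htend : Tendsto (fun k => ℓ k - 1) atTop atTop := by
    rw [tendsto_atTop]
    intro b
    filter_upwards [eventually_ge_atTop (b + m + 1)] with k hk
    have := (hmem k).1
    omega
  have hL2 : Tendsto (fun k => f (ℓ k - 1)) atTop (𝓝 L) := hL.comp htend
  -- squeeze on squared norms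
  have hsq : Tendsto (fun k => ‖x (ℓ k) - x (ℓ k - 1)‖ ^ 2) atTop (𝓝 0) := by
    have hg : Tendsto (fun k => (f (ℓ k - 1) - f k) / a) atTop (𝓝 0) := by
      have := (hL2.sub hL).div_const a
      simpa using this
    refine squeeze_zero' ?_ ?_ hg
    · filter_upwards with k using sq_nonneg _
    · filter_upwards [eventually_ge_atTop (m + 1)] with k hk
      have h1 : 1 ≤ ℓ k := by have := (hmem k).1; omega
      have := hH1 (ℓ k - 1)
      rw [Nat.sub_add_cancel h1] at this
      rw [le_div_iff₀ ha]
      have : a * ‖x (ℓ k) - x (ℓ k - 1)‖ ^ 2 ≤ f (ℓ k - 1) - f k := by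
        simp only [hf]; linarith
      linarith [this]
  -- conclude for norms
  have := (Real.continuous_sqrt.tendsto 0).comp hsq
  simp only [Function.comp_def, Real.sqrt_zero] at this
  exact this.congr fun k => Real.sqrt_sq (norm_nonneg _)
end

section
/- Let Φ : X → ℝ ∪ {+∞} be proper and bounded below, m ∈ ℕ, a > 0, and let {x^k} satisfy Φ(x^{k+1}) + a‖x^{k+1} - x^k‖² ≤ Φ(x^{ℓ(k)}) for all k, where ℓ(k) is the largest index in argmax{Φ(x^j) : j = max(k-m,0), …, k}. If there exists k₀ ∈ ℕ such that Φ(x^{ℓ(k)}) = Φ(x^{ℓ(k₀)}) for all k ≥ k₀, then x^k = x^{k₀} for all k ≥ k₀. -/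
open Filter Topology

/-- Lemma 2.2(iii): if the partial-maximum value sequence is eventually constant,
then the iterates are eventually constant. -/
theorem stmt_3 {X : Type*} [NormedAddCommGroup X] [InnerProductSpace ℝ X]
    [FiniteDimensional ℝ X]
    (Φ : X → ℝ) (hbdd : BddBelow (Set.range Φ)) (m : ℕ) (a : ℝ) (ha : 0 < a)
    (x : ℕ → X) (ℓ : ℕ → ℕ)
    (hℓmem : ∀ k, ℓ k ∈ Finset.Icc (k - m) k)
    (hℓmax : ∀ k, ∀ j ∈ Finset.Icc (k - m) k, Φ (x j) ≤ Φ (x (ℓ k)))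
    (hℓlargest : ∀ k, ∀ j ∈ Finset.Icc (k - m) k, Φ (x j) = Φ (x (ℓ k)) → j ≤ ℓ k)
    (hH1 : ∀ k, Φ (x (k + 1)) + a * ‖x (k + 1) - x k‖ ^ 2 ≤ Φ (x (ℓ k)))
    (k₀ : ℕ) (hconst : ∀ k, k₀ ≤ k → Φ (x (ℓ k)) = Φ (x (ℓ k₀))) :
    ∀ k, k₀ ≤ k → x k = x k₀ := by
  set C := Φ (x (ℓ k₀)) with hC
  -- key step: if Φ(x^{j+1}) = C and j ≥ k₀ then x^{j+1} = x^j (and hence Φ(x^j) = C)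
  have key : ∀ j, k₀ ≤ j → Φ (x (j + 1)) = C → x (j + 1) = x j := by
    intro j hj hΦ
    have h1 := hH1 j
    rw [hconst j hj, hΦ] at h1
    have h2 : a * ‖x (j + 1) - x j‖ ^ 2 ≤ 0 := by linarith
    have h3 : ‖x (j + 1) - x j‖ ^ 2 ≤ 0 := nonpos_of_mul_nonpos_right (by linarith [mul_nonneg ha.le (sq_nonneg ‖x (j + 1) - x j‖)]) ha
    have h4 : ‖x (j + 1) - x j‖ = 0 := by nlinarith [norm_nonneg (x (j + 1) - x j)]
    have := norm_eq_zero.mp h4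
    have := sub_eq_zero.mp this
    exact this
  -- Φ(x^n) = C for all n ≥ k₀
  have hΦconst : ∀ n, k₀ ≤ n → Φ (x n) = C := by
    intro n hn
    set p := ℓ (n + m) with hp
    have hnp : n ≤ p := by
      have := hℓmem (n + m)
      simp only [Finset.mem_Icc] at this
      omega
    have hΦp : Φ (x p) = C := hconst (n + m) (by omega)
    -- downward induction from p to n
    have down : ∀ d, ∀ j, k₀ ≤ j → j + d = p → Φ (x j) = C := by
      intro d
      induction d with
      | zero => intro j hj hjp; simpa [← hjp] using hΦp
      | succ d ih =>
        intro j hj hjp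
        have h1 : Φ (x (j + 1)) = C := ih (j + 1) (by omega) (by omega)
        have h2 := key j hj h1
        rw [← h2]; exact h1
    exact down (p - n) n hn (by omega)
  intro k hk
  induction k with
  | zero =>
    have : k₀ = 0 := Nat.le_zero.mp hk
    rw [this]
  | succ k ih =>
    rcases Nat.lt_or_ge k₀ (k + 1) with h | h
    · have hk' : k₀ ≤ k := by omega
      have h1 : Φ (x (k + 1)) = C := hΦconst (k + 1) (by omega)
      rw [key k hk' h1]
      exact ih hk'
    · have : k₀ = k + 1 := le_antisymm hk h
      rw [this]
end

section
/- Let Φ : X → ℝ ∪ {+∞} be proper, lower semicontinuous, and bounded below. Let {x^k} be a bounded sequence satisfying: (H1) Φ(x^{k+1}) + a‖x^{k+1} - x^k‖² ≤ Φ(x^{ℓ(k)}) for some a > 0 and all k, where ℓ(k) is the largest index in argmax{Φ(x^j) : j = max(k-m,0),…,k}; and (H2) for any convergent subsequence {x^{ℓ(k_j)}}, limsup_{j→∞} Φ(x^{ℓ(k_j)}) ≤ Φ(lim_{j→∞} x^{ℓ(k_j)}). Then lim_{k→∞} ‖x^{k+1} - x^k‖ = 0, lim_{k→∞} ‖x^k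 - x^{ℓ(k)}‖ = 0, and lim_{k→∞} Φ(x^k) = ϖ*, where ϖ* := lim_{k→∞} Φ(x^{ℓ(k)}). -/
/-!
Since `ℓ(k+1)` either lies in the window of `ℓ(k)` or equals `k + 1`, (H1) makes the sequence
`Φ(x^{ℓ(k)})` nonincreasing; being bounded below it converges to some `ϖ`. The heart of the
argument is a lower bound: any bounded sequence that shadows a subsequence of `x^{ℓ(k)}` has
all its values eventually above every `c < ϖ`, because a limit point `p` of it is a limit point
of `x^{ℓ(k)}`, so `ϖ ≤ Φ(p)` by (H2), and lower semicontinuity at `p` does the rest.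
Induction on `j` then shows `x^{ℓ(k)-j} - x^{ℓ(k)} → 0` and `Φ(x^{ℓ(k)-j}) → ϖ`: the step from
`j` to `j + 1` is (H1) at index `ℓ(k) - j - 1`. As both `x^k` and `x^{ℓ(k)}` lie within `2m`
steps below `x^{ℓ(k+m)}`, the three limits follow.
-/

open Filter Topology Bornology

lemma antitone_comp_of_max_on_window {α : Type*} [Preorder α] {f : ℕ → α} {ℓ : ℕ → ℕ} {m : ℕ}
    (hℓmem : ∀ k, ℓ k ∈ Finset.Icc (k - m) k)
    (hℓmax : ∀ k, ∀ j ∈ Finset.Icc (k - m) k, f j ≤ f (ℓ k))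
    (hstep : ∀ k, f (k + 1) ≤ f (ℓ k)) : Antitone (f ∘ ℓ) := by
  refine antitone_nat_of_succ_le fun k => ?_
  have hmem := Finset.mem_Icc.mp (hℓmem (k + 1))
  rcases Nat.lt_or_ge (ℓ (k + 1)) (k + 1) with hlt | hge
  · exact hℓmax k _ (Finset.mem_Icc.mpr ⟨by omega, by omega⟩)
  · simpa only [Function.comp_apply, le_antisymm hmem.2 hge] using hstep k

lemma tendsto_zero_of_mul_sq_le {r e : ℕ → ℝ} {a : ℝ} (ha : 0 < a) (hr : ∀ k, 0 ≤ r k)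
    (hre : ∀ k, a * r k ^ 2 ≤ e k) (he : Tendsto e atTop (𝓝 0)) :
    Tendsto r atTop (𝓝 0) := by
  have hsqrt : Tendsto (fun k => √(e k / a)) atTop (𝓝 0) := by
    simpa using (he.div_const a).sqrt
  refine squeeze_zero hr (fun k => ?_) hsqrt
  exact Real.le_sqrt_of_sq_le ((le_div_iff₀ ha).mpr (by linarith [hre k]))

section Shadow

variable {X : Type*} [NormedAddCommGroup X] {Φ : X → ℝ}

/-- Hypothesis (H2) on a sequence `u` (in the theorem, `u = x ∘ ℓ`). -/
def UpperSemicontinuousAlongSubseq (Φ : X → ℝ) (u : ℕ → X) : Prop :=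
  ∀ φ : ℕ → ℕ, StrictMono φ → ∀ p : X, Tendsto (fun j => u (φ j)) atTop (𝓝 p) →
    limsup (fun j => Φ (u (φ j))) atTop ≤ Φ p

lemma UpperSemicontinuousAlongSubseq.comp_strictMono {u : ℕ → X}
    (hu : UpperSemicontinuousAlongSubseq Φ u) {σ : ℕ → ℕ} (hσ : StrictMono σ) :
    UpperSemicontinuousAlongSubseq Φ (fun k => u (σ k)) :=
  fun φ hφ => hu (σ ∘ φ) (hσ.comp hφ)

variable {u : ℕ → X} {ϖ : ℝ}

lemma UpperSemicontinuousAlongSubseq.le_of_tendsto_comp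
    (hu : UpperSemicontinuousAlongSubseq Φ u) (hϖ : Tendsto (fun k => Φ (u k)) atTop (𝓝 ϖ))
    {φ : ℕ → ℕ} (hφ : StrictMono φ) {p : X} (hp : Tendsto (fun j => u (φ j)) atTop (𝓝 p)) :
    ϖ ≤ Φ p :=
  calc ϖ = limsup (fun j => Φ (u (φ j))) atTop := (hϖ.comp hφ.tendsto_atTop).limsup_eq.symm
    _ ≤ Φ p := hu φ hφ p hp

lemma UpperSemicontinuousAlongSubseq.eventually_lt [ProperSpace X]
    (hlsc : LowerSemicontinuous Φ) (hu : UpperSemicontinuousAlongSubseq Φ u)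
    (hϖ : Tendsto (fun k => Φ (u k)) atTop (𝓝 ϖ)) {y : ℕ → X} (hy : IsBounded (Set.range y))
    (hyu : Tendsto (fun k => ‖y k - u k‖) atTop (𝓝 0)) {c : ℝ} (hc : c < ϖ) :
    ∀ᶠ k in atTop, c < Φ (y k) := by
  by_contra h
  obtain ⟨ψ, hψ, hψc⟩ := extraction_of_frequently_atTop
    ((not_eventually.mp h).mono fun _ => le_of_not_gt)
  obtain ⟨p, -, ρ, hρ, hyp⟩ := tendsto_subseq_of_bounded hy fun i => Set.mem_range_self (ψ i)
  have hφ : StrictMono (ψ ∘ ρ) := hψ.comp hρ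
  have hup : Tendsto (fun i => u (ψ (ρ i))) atTop (𝓝 p) := by
    have hdiff := tendsto_zero_iff_norm_tendsto_zero.mpr (hyu.comp hφ.tendsto_atTop)
    simpa using hyp.sub hdiff
  have hnear : ∀ᶠ z in 𝓝 p, c < Φ z := hlsc p c (hc.trans_le (hu.le_of_tendsto_comp hϖ hφ hup))
  obtain ⟨i, hi⟩ := (hyp.eventually hnear).exists
  exact absurd (hψc (ρ i)) (not_le.mpr hi)

lemma UpperSemicontinuousAlongSubseq.tendsto_of_shadow [ProperSpace X]
    (hlsc : LowerSemicontinuous Φ) (hu : UpperSemicontinuousAlongSubseq Φ u)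
    (hϖ : Tendsto (fun k => Φ (u k)) atTop (𝓝 ϖ)) {y : ℕ → X} (hy : IsBounded (Set.range y))
    {σ : ℕ → ℕ} (hσ : StrictMono σ) (hyu : Tendsto (fun k => ‖y k - u (σ k)‖) atTop (𝓝 0))
    {τ : ℕ → ℕ} (hτ : Tendsto τ atTop atTop) (hle : ∀ k, Φ (y k) ≤ Φ (u (τ k))) :
    Tendsto (fun k => Φ (y k)) atTop (𝓝 ϖ) := by
  refine tendsto_order.2 ⟨fun c hc => ?_, fun c hc => ?_⟩
  · exact (hu.comp_strictMono hσ).eventually_lt hlsc (hϖ.comp hσ.tendsto_atTop) hy hyu hc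
  · filter_upwards [(hϖ.comp hτ).eventually_lt_const hc] with k hk
    exact (hle k).trans_lt hk

end Shadow

section Descent

variable {X : Type*} [NormedAddCommGroup X] {Φ : X → ℝ} {x : ℕ → X} {ℓ : ℕ → ℕ} {a ϖ : ℝ}

lemma tendsto_norm_succ_sub_of_tendsto (ha : 0 < a)
    (hH1 : ∀ k, Φ (x (k + 1)) + a * ‖x (k + 1) - x k‖ ^ 2 ≤ Φ (x (ℓ k)))
    (hϖ : Tendsto (fun k => Φ (x (ℓ k))) atTop (𝓝 ϖ)) {s : ℕ → ℕ} (hs : Tendsto s atTop atTop)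
    (hsucc : Tendsto (fun k => Φ (x (s k + 1))) atTop (𝓝 ϖ)) :
    Tendsto (fun k => ‖x (s k + 1) - x (s k)‖) atTop (𝓝 0) := by
  refine tendsto_zero_of_mul_sq_le ha (fun k => norm_nonneg _) (fun k => ?_)
    (by simpa using (hϖ.comp hs).sub hsucc)
  linarith [hH1 (s k)]

lemma tendsto_norm_sub_sub_nat_zero [ProperSpace X] (hlsc : LowerSemicontinuous Φ)
    (hxbdd : IsBounded (Set.range x)) (ha : 0 < a) (hℓtop : Tendsto ℓ atTop atTop)
    (hself : ∀ k, Φ (x k) ≤ Φ (x (ℓ k)))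
    (hH1 : ∀ k, Φ (x (k + 1)) + a * ‖x (k + 1) - x k‖ ^ 2 ≤ Φ (x (ℓ k)))
    (hH2 : UpperSemicontinuousAlongSubseq Φ fun k => x (ℓ k))
    (hϖ : Tendsto (fun k => Φ (x (ℓ k))) atTop (𝓝 ϖ)) (j : ℕ) :
    Tendsto (fun k => ‖x (ℓ k) - x (ℓ k - j)‖) atTop (𝓝 0) := by
  induction j with
  | zero => simp
  | succ j ih =>
    have hsub : Tendsto (fun k => ℓ k - (j + 1)) atTop atTop :=
      (tendsto_sub_atTop_nat _).comp hℓtop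
    have hshift : ∀ᶠ k in atTop, ℓ k - (j + 1) + 1 = ℓ k - j := by
      filter_upwards [hℓtop.eventually_ge_atTop (j + 1)] with k hk
      omega
    have hvalue : Tendsto (fun k => Φ (x (ℓ k - j))) atTop (𝓝 ϖ) :=
      hH2.tendsto_of_shadow hlsc hϖ (hxbdd.subset (Set.range_comp_subset_range _ x))
        strictMono_id (by simpa [norm_sub_rev] using ih)
        ((tendsto_sub_atTop_nat j).comp hℓtop) (fun k => hself _)
    have hstep : Tendsto (fun k => ‖x (ℓ k - j) - x (ℓ k - (j + 1))‖) atTop (𝓝 0) := by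
      refine (tendsto_norm_succ_sub_of_tendsto ha hH1 hϖ hsub
        (hvalue.congr' ?_)).congr' ?_
      all_goals filter_upwards [hshift] with k hk; rw [hk]
    refine squeeze_zero (fun k => norm_nonneg _) (fun k => norm_sub_le_norm_sub_add_norm_sub _ _ _)
      (by simpa using ih.add hstep)

lemma tendsto_norm_sub_of_le_window
    (hD : ∀ j, Tendsto (fun k => ‖x (ℓ k) - x (ℓ k - j)‖) atTop (𝓝 0)) (N : ℕ)
    {r t : ℕ → ℕ} (hrt : ∀ k, r k ≤ ℓ (t k)) (htr : ∀ k, ℓ (t k) ≤ r k + N)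
    (ht : Tendsto t atTop atTop) :
    Tendsto (fun k => ‖x (r k) - x (ℓ (t k))‖) atTop (𝓝 0) := by
  have hsum : Tendsto (fun k => ∑ j ∈ Finset.range (N + 1), ‖x (ℓ (t k)) - x (ℓ (t k) - j)‖)
      atTop (𝓝 0) := by
    simpa using tendsto_finsetSum _ fun j _ => (hD j).comp ht
  refine squeeze_zero (fun k => norm_nonneg _) (fun k => ?_) hsum
  have hr : ℓ (t k) - (ℓ (t k) - r k) = r k := by have := hrt k; omega
  calc ‖x (r k) - x (ℓ (t k))‖ = ‖x (ℓ (t k)) - x (ℓ (t k) - (ℓ (t k) - r k))‖ := by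
        rw [hr, norm_sub_rev]
    _ ≤ _ := Finset.single_le_sum (f := fun j => ‖x (ℓ (t k)) - x (ℓ (t k) - j)‖)
        (fun _ _ => norm_nonneg _) (Finset.mem_range.mpr (by have := htr k; omega))

end Descent

theorem stmt_5_general {X : Type*} [NormedAddCommGroup X] [InnerProductSpace ℝ X]
    [FiniteDimensional ℝ X]
    (Φ : X → ℝ) (hlsc : LowerSemicontinuous Φ) (hbdd : BddBelow (Set.range Φ))
    (m : ℕ) (a : ℝ) (ha : 0 < a)
    (x : ℕ → X) (hxbdd : ∃ R : ℝ, ∀ k, ‖x k‖ ≤ R) (ℓ : ℕ → ℕ)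
    (hℓmem : ∀ k, ℓ k ∈ Finset.Icc (k - m) k)
    (hℓmax : ∀ k, ∀ j ∈ Finset.Icc (k - m) k, Φ (x j) ≤ Φ (x (ℓ k)))
    (hH1 : ∀ k, Φ (x (k + 1)) + a * ‖x (k + 1) - x k‖ ^ 2 ≤ Φ (x (ℓ k)))
    (hH2 : ∀ φ : ℕ → ℕ, StrictMono φ → ∀ p : X,
      Tendsto (fun j => x (ℓ (φ j))) atTop (𝓝 p) →
      Filter.limsup (fun j => Φ (x (ℓ (φ j)))) atTop ≤ Φ p) :
    ∃ ϖ : ℝ, Tendsto (fun k => Φ (x (ℓ k))) atTop (𝓝 ϖ) ∧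
      Tendsto (fun k => ‖x (k + 1) - x k‖) atTop (𝓝 0) ∧
      Tendsto (fun k => ‖x k - x (ℓ k)‖) atTop (𝓝 0) ∧
      Tendsto (fun k => Φ (x k)) atTop (𝓝 ϖ) := by
  have hℓ : ∀ k, k - m ≤ ℓ k ∧ ℓ k ≤ k := fun k => Finset.mem_Icc.mp (hℓmem k)
  have hself : ∀ k, Φ (x k) ≤ Φ (x (ℓ k)) := fun k => hℓmax k k (by simp)
  have hℓtop : Tendsto ℓ atTop atTop :=
    tendsto_atTop_mono (fun k => (hℓ k).1) (tendsto_sub_atTop_nat m)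
  have hx : IsBounded (Set.range x) := isBounded_iff_forall_norm_le.mpr <| by
    obtain ⟨R, hR⟩ := hxbdd; exact ⟨R, by simpa using hR⟩
  have hanti : Antitone (fun k => Φ (x (ℓ k))) := antitone_comp_of_max_on_window hℓmem hℓmax
    fun k => by nlinarith [hH1 k, sq_nonneg ‖x (k + 1) - x k‖]
  obtain ⟨B, hB⟩ := hbdd
  have hϖ := tendsto_atTop_ciInf hanti ⟨B, by rintro _ ⟨k, rfl⟩; exact hB ⟨_, rfl⟩⟩
  have hD := tendsto_norm_sub_sub_nat_zero hlsc hx ha hℓtop hself hH1 hH2 hϖ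
  have hshift := tendsto_add_atTop_nat m
  have hnear : Tendsto (fun k => ‖x k - x (ℓ (k + m))‖) atTop (𝓝 0) :=
    tendsto_norm_sub_of_le_window hD (2 * m) (fun k => by have := hℓ (k + m); omega)
      (fun k => by have := hℓ (k + m); omega) hshift
  have hwindow : Tendsto (fun k => ‖x (ℓ k) - x (ℓ (k + m))‖) atTop (𝓝 0) :=
    tendsto_norm_sub_of_le_window hD (2 * m) (fun k => by have := hℓ k; have := hℓ (k + m); omega)
      (fun k => by have := hℓ k; have := hℓ (k + m); omega) hshift
  have hΦ : Tendsto (fun k => Φ (x k)) atTop (𝓝 _) :=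
    UpperSemicontinuousAlongSubseq.tendsto_of_shadow (u := fun k => x (ℓ k)) hlsc hH2 hϖ hx
      (strictMono_id.add_const m) hnear tendsto_id hself
  refine ⟨_, hϖ, tendsto_norm_succ_sub_of_tendsto ha hH1 hϖ tendsto_id
    (hΦ.comp (tendsto_add_atTop_nat 1)), ?_, hΦ⟩
  refine squeeze_zero (fun k => norm_nonneg _) (fun k => ?_) (by simpa using hnear.add hwindow)
  simpa only [norm_sub_rev (x (ℓ k))] using norm_sub_le_norm_sub_add_norm_sub (x k) _ (x (ℓ k))

/-- Proposition 2.1: for a bounded sequence satisfying H1 and H2, the successive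
step lengths vanish, `x^k` and `x^{ℓ(k)}` become asymptotically identical, and the
whole objective value sequence converges to `ϖ* = lim Φ(x^{ℓ(k)})`. -/
theorem stmt_5 {X : Type*} [NormedAddCommGroup X] [InnerProductSpace ℝ X]
    [FiniteDimensional ℝ X]
    (Φ : X → ℝ) (hlsc : LowerSemicontinuous Φ) (hbdd : BddBelow (Set.range Φ))
    (m : ℕ) (a : ℝ) (ha : 0 < a)
    (x : ℕ → X) (hxbdd : ∃ R : ℝ, ∀ k, ‖x k‖ ≤ R) (ℓ : ℕ → ℕ)
    (hℓmem : ∀ k, ℓ k ∈ Finset.Icc (k - m) k)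
    (hℓmax : ∀ k, ∀ j ∈ Finset.Icc (k - m) k, Φ (x j) ≤ Φ (x (ℓ k)))
    (hℓlargest : ∀ k, ∀ j ∈ Finset.Icc (k - m) k, Φ (x j) = Φ (x (ℓ k)) → j ≤ ℓ k)
    (hH1 : ∀ k, Φ (x (k + 1)) + a * ‖x (k + 1) - x k‖ ^ 2 ≤ Φ (x (ℓ k)))
    (hH2 : ∀ φ : ℕ → ℕ, StrictMono φ → ∀ p : X,
      Tendsto (fun j => x (ℓ (φ j))) atTop (𝓝 p) →
      Filter.limsup (fun j => Φ (x (ℓ (φ j)))) atTop ≤ Φ p) :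
    ∃ ϖ : ℝ, Tendsto (fun k => Φ (x (ℓ k))) atTop (𝓝 ϖ) ∧
      Tendsto (fun k => ‖x (k + 1) - x k‖) atTop (𝓝 0) ∧
      Tendsto (fun k => ‖x k - x (ℓ k)‖) atTop (𝓝 0) ∧
      Tendsto (fun k => Φ (x k)) atTop (𝓝 ϖ) :=
  stmt_5_general Φ hlsc hbdd m a ha x hxbdd ℓ hℓmem hℓmax hH1 hH2
end
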